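/- Let G be a connected finite simple graph on n vertices and t ≥ 1 an integer. Let μ_1 ≤ μ_2 ≤ ... ≤ μ_n be the Laplacian eigenvalues of the complement of the exact distance t-power G^{[#t]}, and assume μ_n > 0. Then eq_t(G) ≤ n · (1 − μ_2/μ_n) + 1. -/

import Mathlib

open SimpleGraph

/-- `S` is a `t`-equidistant set of `G`: all distinct vertices of `S` are at distance
exactly `t` in `G`. -/
def IsEquidistantSet {V : Type*} (G : SimpleGraph V) (t : ℕ) (S : Finset V) : Prop :=
  (S : Set V).Pairwise fun u v => G.dist u v = t

/-- The `t`-equidistant number of `G`: the maximum size of a `t`-equidistant set. -/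
noncomputable def eqNum {V : Type*} [Fintype V] (G : SimpleGraph V) (t : ℕ) : ℕ :=
  sSup {n : ℕ | ∃ S : Finset V, IsEquidistantSet G t S ∧ S.card = n}

/-- `S` is a `t`-independent set of `G`: all distinct vertices of `S` are at pairwise
distance greater than `t` in `G`. -/
def IsTIndepSet {V : Type*} (G : SimpleGraph V) (t : ℕ) (S : Finset V) : Prop :=
  (S : Set V).Pairwise fun u v => t < G.dist u v

/-- The `t`-independence number of `G`. -/
noncomputable def indepNumT {V : Type*} [Fintype V] (G : SimpleGraph V) (t : ℕ) : ℕ :=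
  sSup {n : ℕ | ∃ S : Finset V, IsTIndepSet G t S ∧ S.card = n}

/-- The equidistant number of `G`: `max {eq_t(G) : 1 ≤ t ≤ diam G}`. -/
noncomputable def eqTotalNum {V : Type*} [Fintype V] (G : SimpleGraph V) : ℕ :=
  (Finset.Icc 1 G.diam).sup (eqNum G)

open scoped Classical

/-- The exact distance `t`-power of `G`: same vertex set, two distinct vertices adjacent iff
they are at distance exactly `t` in `G`. -/
def exactPower {V : Type*} (G : SimpleGraph V) (t : ℕ) : SimpleGraph V where
  Adj u v := u ≠ v ∧ G.dist u v = t
  symm := by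
    constructor
    intro u v h
    exact ⟨h.1.symm, by rw [SimpleGraph.dist_comm]; exact h.2⟩
  loopless := by
    constructor
    intro u h
    exact h.1 rfl

/-!
A `t`-equidistant set `S` is a coclique of `H = (G^{[#t]})ᶜ`. Following Haemers, evaluate the
Laplacian quadratic form of `H` on the indicator vectors of `S` and of each `u ∈ S`, centred so
as to be orthogonal to the all-ones kernel vector. Since `S` is a coclique both values are sums
of degrees, and the Rayleigh bounds give `∑_{u ∈ S} deg u ≤ μₙ |S| (n - |S|) / n` and
`deg u ≥ μ₂ (n - 1) / n`. Comparing, `μ₂ (n - 1) ≤ μₙ (n - |S|)`, which rearranges to the bound.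
-/

open Matrix

namespace Matrix.IsHermitian

variable {V : Type*} [Fintype V] [DecidableEq V] {L : Matrix V V ℝ} (hL : L.IsHermitian)

noncomputable def eigenCoords (x : V → ℝ) : V → ℝ :=
  star (hL.eigenvectorUnitary : Matrix V V ℝ) *ᵥ x

lemma eigenCoords_dotProduct_eigenCoords (x y : V → ℝ) :
    hL.eigenCoords x ⬝ᵥ hL.eigenCoords y = x ⬝ᵥ y := by
  rw [eigenCoords, eigenCoords, dotProduct_mulVec, vecMul_mulVec, star_eq_conjTranspose,
    conjTranspose_eq_transpose_of_trivial, transpose_transpose,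
    ← conjTranspose_eq_transpose_of_trivial, ← star_eq_conjTranspose,
    Unitary.mul_star_self_of_mem hL.eigenvectorUnitary.2, vecMul_one]

lemma eigenCoords_mulVec (x : V → ℝ) (i : V) :
    hL.eigenCoords (L *ᵥ x) i = hL.eigenvalues i * hL.eigenCoords x i := by
  have h := hL.conjStarAlgAut_star_eigenvectorUnitary
  rw [Unitary.conjStarAlgAut_star_apply] at h
  have h2 : star (hL.eigenvectorUnitary : Matrix V V ℝ) * L =
      diagonal (RCLike.ofReal ∘ hL.eigenvalues) * star (hL.eigenvectorUnitary : Matrix V V ℝ) := by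
    rw [← h, mul_assoc, Unitary.mul_star_self_of_mem hL.eigenvectorUnitary.2, mul_one]
  rw [eigenCoords, mulVec_mulVec, h2, ← mulVec_mulVec, mulVec_diagonal]
  rfl

lemma dotProduct_mulVec_eq_sum (x : V → ℝ) :
    x ⬝ᵥ (L *ᵥ x) = ∑ i, hL.eigenvalues i * hL.eigenCoords x i ^ 2 := by
  rw [← eigenCoords_dotProduct_eigenCoords hL, dotProduct]
  exact Finset.sum_congr rfl fun i _ => by rw [eigenCoords_mulVec]; ring

lemma dotProduct_self_eq_sum (x : V → ℝ) : x ⬝ᵥ x = ∑ i, hL.eigenCoords x i ^ 2 := by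
  rw [← eigenCoords_dotProduct_eigenCoords hL, dotProduct]
  simp only [sq]

lemma dotProduct_mulVec_le {b : ℝ} (hb : ∀ i, hL.eigenvalues i ≤ b) (x : V → ℝ) :
    x ⬝ᵥ (L *ᵥ x) ≤ b * (x ⬝ᵥ x) := by
  rw [dotProduct_mulVec_eq_sum hL, dotProduct_self_eq_sum hL, Finset.mul_sum]
  exact Finset.sum_le_sum fun i _ => mul_le_mul_of_nonneg_right (hb i) (sq_nonneg _)

lemma le_dotProduct_mulVec {a : ℝ} {i₀ : V} (ha : ∀ i ≠ i₀, a ≤ hL.eigenvalues i) {x : V → ℝ}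
    (hx : hL.eigenCoords x i₀ = 0) : a * (x ⬝ᵥ x) ≤ x ⬝ᵥ (L *ᵥ x) := by
  rw [dotProduct_mulVec_eq_sum hL, dotProduct_self_eq_sum hL, Finset.mul_sum]
  refine Finset.sum_le_sum fun i _ => ?_
  rcases eq_or_ne i i₀ with rfl | hi
  · simp [hx]
  · exact mul_le_mul_of_nonneg_right (ha i hi) (sq_nonneg _)

lemma eigenCoords_eq_zero_of_dotProduct_eq_zero {v : V → ℝ} (hv : L *ᵥ v = 0) (hv0 : v ≠ 0)
    {i₀ : V} (hne : ∀ i ≠ i₀, hL.eigenvalues i ≠ 0) {x : V → ℝ} (hx : x ⬝ᵥ v = 0) :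
    hL.eigenCoords x i₀ = 0 := by
  have hvi : ∀ i ≠ i₀, hL.eigenCoords v i = 0 := fun i hi => by
    have h := hL.eigenCoords_mulVec v i
    rw [hv, eigenCoords, mulVec_zero] at h
    exact (mul_eq_zero.mp h.symm).resolve_left (hne i hi)
  have hvi₀ : hL.eigenCoords v i₀ ≠ 0 := fun h0 => hv0 <| dotProduct_self_eq_zero.mp <| by
    have hzero : hL.eigenCoords v = 0 := funext fun i => by
      rcases eq_or_ne i i₀ with rfl | hi
      exacts [h0, hvi i hi]
    rw [← eigenCoords_dotProduct_eigenCoords hL, hzero, zero_dotProduct]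
  rw [← eigenCoords_dotProduct_eigenCoords hL, dotProduct,
    Finset.sum_eq_single i₀ (fun i _ hi => by rw [hvi i hi, mul_zero]) (by simp)] at hx
  exact (mul_eq_zero.mp hx).resolve_right hvi₀

end Matrix.IsHermitian

open Finset

namespace Finset

variable {V : Type*} [Fintype V] [DecidableEq V]

noncomputable def centeredIndicator (S : Finset V) : V → ℝ :=
  fun v => (if v ∈ S then 1 else 0) - #S / Fintype.card V

variable [Nonempty V] (S : Finset V)

lemma centeredIndicator_dotProduct_one : S.centeredIndicator ⬝ᵥ (fun _ => 1) = 0 := by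
  have hn : (Fintype.card V : ℝ) ≠ 0 := by positivity
  simp only [centeredIndicator, dotProduct, mul_one, sum_sub_distrib, sum_boole]
  simp [mul_div_cancel₀ _ hn]

lemma centeredIndicator_dotProduct_self :
    S.centeredIndicator ⬝ᵥ S.centeredIndicator = #S * (Fintype.card V - #S) / Fintype.card V := by
  have hn : (Fintype.card V : ℝ) ≠ 0 := by positivity
  have hv : ∀ v, S.centeredIndicator v * S.centeredIndicator v =
      (if v ∈ S then 1 else 0) * (1 - 2 * (#S / Fintype.card V)) + (#S / Fintype.card V) ^ 2 := by
    intro v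
    by_cases h : v ∈ S <;> simp [centeredIndicator, h] <;> ring
  simp only [dotProduct, hv, sum_add_distrib, ← sum_mul, sum_boole, filter_univ_mem, sum_const,
    card_univ, nsmul_eq_mul]
  field_simp
  ring

end Finset

namespace SimpleGraph

variable {V : Type*} [Fintype V] [DecidableEq V] (H : SimpleGraph V) [DecidableRel H.Adj]

lemma dotProduct_lapMatrix_mulVec_sub_const (x : V → ℝ) (c : ℝ) :
    (x - fun _ => c) ⬝ᵥ (H.lapMatrix ℝ *ᵥ (x - fun _ => c)) = x ⬝ᵥ (H.lapMatrix ℝ *ᵥ x) := by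
  simp only [← toLinearMap₂'_apply', lapMatrix_toLinearMap₂', Pi.sub_apply,
    sub_sub_sub_cancel_right]

lemma IsIndepSet.centeredIndicator_dotProduct_lapMatrix_mulVec {S : Finset V}
    (hS : H.IsIndepSet (S : Set V)) :
    S.centeredIndicator ⬝ᵥ (H.lapMatrix ℝ *ᵥ S.centeredIndicator) = ∑ u ∈ S, (H.degree u : ℝ) := by
  have hχ := H.dotProduct_lapMatrix_mulVec_sub_const (fun v => if v ∈ S then 1 else 0)
    (#S / Fintype.card V)
  rw [show (fun v => if v ∈ S then (1 : ℝ) else 0) - (fun _ => (#S : ℝ) / Fintype.card V) =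
    S.centeredIndicator from rfl] at hχ
  rw [hχ, dotProduct]
  simp only [lapMatrix_mulVec_apply, boole_mul, sum_ite_mem, univ_inter]
  refine sum_congr rfl fun u hu => ?_
  have hN : ∀ v ∈ H.neighborFinset u, v ∉ S := fun v hv hvS =>
    hS hu hvS (H.ne_of_adj ((H.mem_neighborFinset u v).mp hv)) ((H.mem_neighborFinset u v).mp hv)
  simp [hu, Finset.disjoint_iff_inter_eq_empty.mp (Finset.disjoint_left.mpr hN)]

lemma le_dotProduct_lapMatrix_mulVec [Nonempty V] (hL : (H.lapMatrix ℝ).IsHermitian)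
    {a : ℝ} (ha : 0 < a) {i₀ : V} (hai : ∀ i ≠ i₀, a ≤ hL.eigenvalues i) {x : V → ℝ}
    (hx : x ⬝ᵥ (fun _ => 1) = 0) : a * (x ⬝ᵥ x) ≤ x ⬝ᵥ (H.lapMatrix ℝ *ᵥ x) := by
  have hone : (fun _ => (1 : ℝ)) ≠ 0 := fun h => one_ne_zero (congrFun h (Classical.arbitrary V))
  exact hL.le_dotProduct_mulVec hai <| hL.eigenCoords_eq_zero_of_dotProduct_eq_zero
    H.lapMatrix_mulVec_const_eq_zero hone (fun i hi => (ha.trans_le (hai i hi)).ne') hx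

theorem mul_card_sub_one_le_of_isIndepSet (hL : (H.lapMatrix ℝ).IsHermitian) {a b : ℝ}
    (ha : 0 < a) {i₀ : V} (hai : ∀ i ≠ i₀, a ≤ hL.eigenvalues i) (hb : ∀ i, hL.eigenvalues i ≤ b)
    {S : Finset V} (hS : H.IsIndepSet (S : Set V)) (hSne : S.Nonempty) :
    a * (Fintype.card V - 1) ≤ b * (Fintype.card V - #S) := by
  have : Nonempty V := ⟨hSne.choose⟩
  set n : ℝ := (Fintype.card V : ℝ)
  have hdeg : ∀ u ∈ S, a * ((n - 1) / n) ≤ H.degree u := fun u _ => by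
    have hu : H.IsIndepSet (({u} : Finset V) : Set V) := by
      rw [coe_singleton]
      exact Set.pairwise_singleton _ _
    have h := H.le_dotProduct_lapMatrix_mulVec hL ha hai
      ({u} : Finset V).centeredIndicator_dotProduct_one
    rwa [centeredIndicator_dotProduct_self, hu.centeredIndicator_dotProduct_lapMatrix_mulVec,
      card_singleton, sum_singleton, Nat.cast_one, one_mul] at h
  have hsum : ∑ u ∈ S, (H.degree u : ℝ) ≤ b * (#S * (n - #S) / n) := by
    rw [← hS.centeredIndicator_dotProduct_lapMatrix_mulVec, ← S.centeredIndicator_dotProduct_self]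
    exact hL.dotProduct_mulVec_le hb _
  have hsize : 0 < (#S : ℝ) / n := by have := hSne.card_pos; positivity
  refine le_of_mul_le_mul_left ?_ hsize
  calc #S / n * (a * (n - 1)) = #S • (a * ((n - 1) / n)) := by rw [nsmul_eq_mul]; ring
    _ ≤ ∑ u ∈ S, (H.degree u : ℝ) := S.card_nsmul_le_sum _ _ hdeg
    _ ≤ b * (#S * (n - #S) / n) := hsum
    _ = #S / n * (b * (n - #S)) := by ring

end SimpleGraph

lemma exists_isEquidistantSet_card_eq_eqNum {V : Type*} [Fintype V] (G : SimpleGraph V) (t : ℕ) :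
    ∃ S : Finset V, IsEquidistantSet G t S ∧ #S = eqNum G t :=
  Nat.sSup_mem (s := {m | ∃ S : Finset V, IsEquidistantSet G t S ∧ #S = m})
    ⟨0, ∅, by simp [IsEquidistantSet]⟩ ⟨Fintype.card V, fun _ ⟨S, _, hS⟩ => hS ▸ S.card_le_univ⟩

lemma IsEquidistantSet.isIndepSet_compl_exactPower {V : Type*} {G : SimpleGraph V} {t : ℕ}
    {S : Finset V} (hS : IsEquidistantSet G t S) : (exactPower G t)ᶜ.IsIndepSet (S : Set V) :=
  fun _ hu _ hv huv hadj => (compl_adj _ _ _ |>.mp hadj).2 ⟨huv, hS hu hv huv⟩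

/-- Let `G` be connected on `n` vertices, `t ≥ 1`, and let
`μ_1 ≤ ⋯ ≤ μ_n` be the Laplacian eigenvalues of the complement of `G^{[#t]}`. If `μ_n > 0`
then `eq_t(G) ≤ n (1 - μ_2/μ_n) + 1`. -/
theorem eqNum_le_haemers_phi_bound {V : Type*} [Fintype V] (G : SimpleGraph V)
    (n : ℕ) (hn : Fintype.card V = n) (hn2 : 2 ≤ n)
    (t : ℕ)
    (hL : ((exactPower G t)ᶜ.lapMatrix ℝ).IsHermitian)
    (μ : Fin n → ℝ) (hmono : Monotone μ)
    (hlist : ∃ e : Fin n ≃ V, ∀ i, μ i = hL.eigenvalues (e i))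
    (hpos : (0 : ℝ) < μ ⟨n - 1, by omega⟩) :
    (eqNum G t : ℝ) ≤ n * (1 - μ ⟨1, by omega⟩ / μ ⟨n - 1, by omega⟩) + 1 := by
  obtain ⟨e, he⟩ := hlist
  obtain ⟨S, hS, hcard⟩ := exists_isEquidistantSet_card_eq_eqNum G t
  rw [← hcard]
  set μ₂ := μ ⟨1, by omega⟩
  set μₙ := μ ⟨n - 1, by omega⟩
  have hSn : (#S : ℝ) ≤ n := by rw [← hn]; exact_mod_cast S.card_le_univ
  have hμ : μ₂ / μₙ ≤ 1 := div_le_one_of_le₀ (hmono (by simp [Fin.le_def]; omega)) hpos.le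
  rcases le_or_gt μ₂ 0 with hμ₂ | hμ₂
  · nlinarith [div_nonpos_of_nonpos_of_nonneg hμ₂ hpos.le]
  rcases S.eq_empty_or_nonempty with rfl | hSne
  · simp only [card_empty, CharP.cast_eq_zero]; nlinarith
  have hupper : ∀ v, hL.eigenvalues v ≤ μₙ := fun v => by
    rw [← e.apply_symm_apply v, ← he]
    exact hmono (by simp [Fin.le_def]; omega)
  have hlower : ∀ v ≠ e ⟨0, by omega⟩, μ₂ ≤ hL.eigenvalues v := fun v hv => by
    rw [← e.apply_symm_apply v, ← he]
    refine hmono (Fin.le_def.mpr (Nat.one_le_iff_ne_zero.mpr fun h => hv ?_))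
    rw [← e.apply_symm_apply v]; congr; exact Fin.ext h
  have key := mul_card_sub_one_le_of_isIndepSet _ hL hμ₂ hlower hupper
    hS.isIndepSet_compl_exactPower hSne
  rw [hn] at key
  have hdiv : μ₂ * (n - 1) / μₙ ≤ n - #S := (div_le_iff₀' hpos).mpr key
  have hsplit : μ₂ * (n - 1) / μₙ = n * (μ₂ / μₙ) - μ₂ / μₙ := by ring
  linarith
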